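/- There exists a subset H of Fin 5 × Fin 5 × Fin 5 (equivalently a quotient structure on 3 classes with sizes r₁ = 1, r₂ = 2, r₃ = 2) that is a generalized quotient of a quasigroup (i.e., arises as supp of the triple quotient of a Latin square by a partition) but is not a generalized uniform quotient of any quasigroup: there is no matrix N : H → ℝ>0 extended by zero whose sums along every line are all equal to a single positive constant. -/
import Mathlib

private def Mex : Fin 3 × Fin 3 × Fin 3 → ℕ := fun p =>
  ![![![0,1,0],![0,1,1],![1,0,1]],
    ![![1,1,0],![0,2,2],![1,1,2]],
    ![![0,0,2],![2,1,1],![0,3,1]]] p.1 p.2.1 p.2.2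

theorem stmt_18 :
    ∃ H : Set (Fin 3 × Fin 3 × Fin 3),
      -- H is a generalized quotient of a quasigroup: there are positive
      -- integers r_i and an integer matrix supported exactly on H whose
      -- line sums are r_i * r_j
      (∃ (r : Fin 3 → ℕ) (M : Fin 3 × Fin 3 × Fin 3 → ℕ),
        (∀ i, 0 < r i) ∧
        (∀ p, M p ≠ 0 ↔ p ∈ H) ∧
        (∀ i j : Fin 3, ∑ x : Fin 3, M (x, i, j) = r i * r j) ∧
        (∀ i j : Fin 3, ∑ x : Fin 3, M (i, x, j) = r i * r j) ∧
        (∀ i j : Fin 3, ∑ x : Fin 3, M (i, j, x) = r i * r j)) ∧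
      -- but H is not a generalized uniform quotient: no positive real matrix
      -- supported exactly on H has all line sums equal to a common positive β
      ¬ ∃ (N : Fin 3 × Fin 3 × Fin 3 → ℝ) (β : ℝ),
          0 < β ∧
          (∀ p ∈ H, 0 < N p) ∧ (∀ p ∉ H, N p = 0) ∧
          (∀ i j : Fin 3, ∑ x : Fin 3, N (x, i, j) = β) ∧
          (∀ i j : Fin 3, ∑ x : Fin 3, N (i, x, j) = β) ∧
          (∀ i j : Fin 3, ∑ x : Fin 3, N (i, j, x) = β) := by
  refine ⟨{p | Mex p ≠ 0}, ⟨![1,2,2], Mex, ?_, fun p => Iff.rfl, ?_, ?_, ?_⟩, ?_⟩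
  · decide
  · decide
  · decide
  · decide
  rintro ⟨N, β, hβ, hpos, hzero, h1, h2, -⟩
  -- nonnegativity of N
  have hnn : ∀ p, 0 ≤ N p := by
    intro p
    by_cases hp : p ∈ {p | Mex p ≠ 0}
    · exact (hpos p hp).le
    · exact (hzero p hp).ge
  -- the line (x,0,0) has only (1,0,0) in H, so N (1,0,0) = β
  have e1 := h1 0 0
  rw [Fin.sum_univ_three] at e1
  have z0 : N (0, 0, 0) = 0 := hzero _ (by simp [Mex])
  have z2 : N (2, 0, 0) = 0 := hzero _ (by simp [Mex])
  rw [z0, z2, zero_add, add_zero] at e1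
  -- the line (1,x,0) contains (1,0,0) and (1,2,0) ∈ H
  have e2 := h2 1 0
  rw [Fin.sum_univ_three] at e2
  have p120 : 0 < N (1, 2, 0) := hpos _ (by simp [Mex])
  have p110 : 0 ≤ N (1, 1, 0) := hnn _
  linarith
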